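/- arXiv:2305.15982 — 7 statements merged into one kernel-verified Lean document; each statement's English description precedes it below -/
import Mathlib

section
/- Weak theorem of alternatives for common quadratic Lyapunov functions of continuous-time switched linear systems: it cannot simultaneously hold that (a) there exists a symmetric positive definite P ∈ ℝ^{n×n} with A_iᵀP + PA_i negative definite for all i = 1,…,N, and (b) there exist symmetric positive semidefinite matrices R₀, R₁,…,R_N ∈ ℝ^{n×n}, not all zero, with R₀ = Σ_{i=1}^N (A_i R_i + R_i A_iᵀ). -/
/-!
Pair the identity `R₀ = ∑ (Aᵢ Rᵢ + Rᵢ Aᵢᵀ)` with `P` under the trace: with `Qᵢ = -(Aᵢᵀ P + P Aᵢ)`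
it becomes `tr (P R₀) + ∑ tr (Qᵢ Rᵢ) = 0`. Every term is the trace of a product of a positive
definite and a positive semidefinite matrix, hence nonnegative, and vanishes only when the
semidefinite factor does; so all of `R₀, R₁, …, R_N` would be zero.
-/

open Matrix

-- The C⋆-algebra structure on matrices supplies the factorisations `R = Bᴴ * B`.
open scoped ComplexOrder MatrixOrder Matrix.Norms.L2Operator

namespace Matrix

variable {𝕜 ι : Type*} [RCLike 𝕜] [Fintype ι]

theorem PosSemidef.trace_mul_nonneg {P R : Matrix ι ι 𝕜} (hP : P.PosSemidef) (hR : R.PosSemidef) :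
    0 ≤ (P * R).trace := by
  classical
  obtain ⟨B, rfl⟩ := CStarAlgebra.nonneg_iff_eq_star_mul_self.mp hR.nonneg
  rw [star_eq_conjTranspose, ← mul_assoc, trace_mul_cycle]
  exact (hP.mul_mul_conjTranspose_same B).trace_nonneg

theorem PosDef.trace_mul_eq_zero_iff {P R : Matrix ι ι 𝕜} (hP : P.PosDef) (hR : R.PosSemidef) :
    (P * R).trace = 0 ↔ R = 0 := by
  classical
  obtain ⟨C, hC, rfl⟩ := CStarAlgebra.isStrictlyPositive_iff_eq_star_mul_self.mp
    hP.isStrictlyPositive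
  rw [star_eq_conjTranspose, mul_assoc, trace_mul_comm,
    (hR.mul_mul_conjTranspose_same C).trace_eq_zero_iff, ← star_eq_conjTranspose,
    hC.star.mul_left_eq_zero, hC.mul_right_eq_zero]

theorem trace_mul_add_mul_transpose {R : Type*} [CommRing R] (P A S : Matrix ι ι R) :
    (P * (A * S + S * Aᵀ)).trace = ((Aᵀ * P + P * A) * S).trace := by
  rw [mul_add, add_mul, trace_add, trace_add, add_comm, ← mul_assoc, ← mul_assoc, trace_mul_cycle]

end Matrix

theorem weak_toa_cqlf {n N : ℕ} (A : Fin N → Matrix (Fin n) (Fin n) ℝ) :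
    ¬ ((∃ P : Matrix (Fin n) (Fin n) ℝ, P.IsSymm ∧ P.PosDef ∧
        ∀ i, (-((A i)ᵀ * P + P * A i)).PosDef) ∧
      (∃ (R₀ : Matrix (Fin n) (Fin n) ℝ) (R : Fin N → Matrix (Fin n) (Fin n) ℝ),
        R₀.IsSymm ∧ R₀.PosSemidef ∧ (∀ i, (R i).IsSymm ∧ (R i).PosSemidef) ∧
        ¬ (R₀ = 0 ∧ ∀ i, R i = 0) ∧
        R₀ = ∑ i, (A i * R i + R i * (A i)ᵀ))) := by
  rintro ⟨⟨P, -, hP, hQ⟩, R₀, R, -, hR₀, hR, hnz, hsum⟩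
  have htrace : (P * R₀).trace + ∑ i, (-((A i)ᵀ * P + P * A i) * R i).trace = 0 := by
    simp only [hsum, Finset.mul_sum, trace_sum, trace_mul_add_mul_transpose, neg_mul, trace_neg,
      Finset.sum_neg_distrib, add_neg_cancel]
  have hQR : ∀ i ∈ Finset.univ, 0 ≤ (-((A i)ᵀ * P + P * A i) * R i).trace := fun i _ ↦
    (hQ i).posSemidef.trace_mul_nonneg (hR i).2
  obtain ⟨hPR₀, hQR_sum⟩ := (add_eq_zero_iff_of_nonneg
    (hP.posSemidef.trace_mul_nonneg hR₀) (Finset.sum_nonneg hQR)).mp htrace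
  refine hnz ⟨(hP.trace_mul_eq_zero_iff hR₀).mp hPR₀, fun i ↦ ?_⟩
  exact ((hQ i).trace_mul_eq_zero_iff (hR i).2).mp
    ((Finset.sum_eq_zero_iff_of_nonneg hQR).mp hQR_sum i (Finset.mem_univ i))
end

section
/- Weak theorem of alternatives for poly-quadratic stability: it cannot simultaneously hold that (a) there exist symmetric positive definite matrices P₁,…,P_N ∈ ℝ^{n×n} with P_i − A_iᵀ P_j A_i positive definite for all i,j ∈ {1,…,N}, and (b) there exist symmetric positive semidefinite matrices R₁,…,R_{N²} ∈ ℝ^{n×n}, not all zero, such that Σ_{j=1}^N (A_j R_{N(j−1)+i} A_jᵀ − R_{N(i−1)+j}) is positive semidefinite for every i ∈ {1,…,N}. -/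
/-!
Pair the residual of (b) at `i` with `P i` through the trace. Each pairing is nonnegative since
both matrices are positive semidefinite. Moving the conjugation by `A j` onto `P i` with
`Tr(P A R Aᵀ) = Tr(Aᵀ P A R)` and reindexing the double sum turns the total into
`-∑ i j, Tr((P i - (A i)ᵀ P j A i) R i j)`, which is negative because every factor
`P i - (A i)ᵀ P j A i` is positive definite and some `R i j` is a nonzero positive semidefinite
matrix.
-/
open Matrix
open scoped ComplexOrder

variable {𝕜 n : Type*} [RCLike 𝕜] [Fintype n]

theorem Matrix.trace_mul_vecMulVec_star (P : Matrix n n 𝕜) (v : n → 𝕜) :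
    (P * vecMulVec v (star v)).trace = star v ⬝ᵥ (P *ᵥ v) := by
  rw [mul_vecMulVec, trace_vecMulVec, dotProduct_comm]

theorem Matrix.PosSemidef.trace_mul_nonneg_s4 {P M : Matrix n n 𝕜} (hP : P.PosSemidef)
    (hM : M.PosSemidef) : 0 ≤ (P * M).trace := by
  obtain ⟨m, v, rfl⟩ := posSemidef_iff_eq_sum_vecMulVec.mp hM
  simp only [Matrix.mul_sum, trace_sum, trace_mul_vecMulVec_star]
  exact Finset.sum_nonneg fun i _ => hP.dotProduct_mulVec_nonneg _

theorem Matrix.PosDef.trace_mul_pos {P M : Matrix n n 𝕜} (hP : P.PosDef) (hM : M.PosSemidef)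
    (hM0 : M ≠ 0) : 0 < (P * M).trace := by
  obtain ⟨m, v, rfl⟩ := posSemidef_iff_eq_sum_vecMulVec.mp hM
  obtain ⟨k, hk⟩ : ∃ k, v k ≠ 0 := by
    by_contra! h
    simp [h] at hM0
  simp only [Matrix.mul_sum, trace_sum, trace_mul_vecMulVec_star]
  exact Finset.sum_pos' (fun i _ => hP.posSemidef.dotProduct_mulVec_nonneg _)
    ⟨k, Finset.mem_univ _, hP.dotProduct_mulVec_pos hk⟩

theorem sum_trace_mul_pos {κ : Type*} [Fintype κ] {Q R : κ → Matrix n n 𝕜}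
    (hQ : ∀ k, (Q k).PosDef) (hR : ∀ k, (R k).PosSemidef) (hR0 : ∃ k, R k ≠ 0) :
    0 < ∑ k, (Q k * R k).trace := by
  obtain ⟨k, hk⟩ := hR0
  exact Finset.sum_pos' (fun i _ => (hQ i).posSemidef.trace_mul_nonneg_s4 (hR i))
    ⟨k, Finset.mem_univ _, (hQ k).trace_mul_pos (hR k) hk⟩

theorem sum_trace_mul_sum_conj_sub_eq {ι α : Type*} [Fintype ι] [CommRing α]
    (P A : ι → Matrix n n α) (S : ι → ι → Matrix n n α) :
    ∑ i, (P i * ∑ j, (A j * S j i * (A j)ᵀ - S i j)).trace =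
      -∑ ij : ι × ι, ((P ij.1 - (A ij.1)ᵀ * P ij.2 * A ij.1) * S ij.1 ij.2).trace := by
  have conj : ∀ i j, (P i * (A j * S j i * (A j)ᵀ)).trace = ((A j)ᵀ * P i * A j * S j i).trace :=
    fun i j => by
      simp only [Matrix.mul_assoc]
      rw [trace_mul_comm (A j)ᵀ]
      simp only [Matrix.mul_assoc]
  simp only [Matrix.mul_sum, trace_sum, Matrix.mul_sub, Matrix.sub_mul, trace_sub, conj,
    Finset.sum_sub_distrib, Fintype.sum_prod_type]
  rw [Finset.sum_comm (f := fun i j => ((A j)ᵀ * P i * A j * S j i).trace)]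
  ring

/-- `R j i` stands for `R_{N(j-1)+i}` of the paper. -/
theorem weak_toa_poly_qs {n N : ℕ} (A : Fin N → Matrix (Fin n) (Fin n) ℝ) :
    ¬ ((∃ P : Fin N → Matrix (Fin n) (Fin n) ℝ,
        (∀ i, (P i).IsSymm ∧ (P i).PosDef) ∧
        ∀ i j, (P i - (A i)ᵀ * P j * A i).PosDef) ∧
      (∃ R : Fin N → Fin N → Matrix (Fin n) (Fin n) ℝ,
        (∀ j i, (R j i).IsSymm ∧ (R j i).PosSemidef) ∧
        (¬ ∀ j i, R j i = 0) ∧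
        ∀ i, (∑ j, (A j * R j i * (A j)ᵀ - R i j)).PosSemidef)) := by
  rintro ⟨⟨P, hP, hPA⟩, R, hR, hR0, hres⟩
  have hpairing_nonneg : 0 ≤ ∑ i, (P i * ∑ j, (A j * R j i * (A j)ᵀ - R i j)).trace :=
    Finset.sum_nonneg fun i _ => (hP i).2.posSemidef.trace_mul_nonneg_s4 (hres i)
  have hpairing_pos :
      0 < ∑ ij : Fin N × Fin N, ((P ij.1 - (A ij.1)ᵀ * P ij.2 * A ij.1) * R ij.1 ij.2).trace := by
    obtain ⟨i, j, hij⟩ : ∃ i j, R i j ≠ 0 := by simpa only [not_forall] using hR0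
    exact sum_trace_mul_pos (fun ij => hPA ij.1 ij.2) (fun ij => (hR ij.1 ij.2).2) ⟨(i, j), hij⟩
  rw [sum_trace_mul_sum_conj_sub_eq] at hpairing_nonneg
  linarith
end

section
/- Weak theorem of alternatives for poly-quadratic detectability: it cannot simultaneously hold that (a) there exist symmetric positive definite matrices P₁,…,P_N ∈ ℝ^{n×n} with P_i − A_iᵀ P_j A_i + CᵀC positive definite for all i,j ∈ {1,…,N}, and (b) there exist symmetric positive semidefinite matrices R₁,…,R_{N²} ∈ ℝ^{n×n}, not all zero, such that Σ_{j=1}^N (A_j R_{N(j−1)+i} A_jᵀ − R_{N(i−1)+j}) is positive semidefinite for every i ∈ {1,…,N}, and C (Σ_{i=1}^{N²} R_i) Cᵀ = 0. -/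
/-!
Pair the primal inequalities with the dual matrices through the trace inner product: with
`Q i j = P i - (A i)ᵀ * P j * A i + Cᵀ * C` and `S i = ∑ j, (A j * R j i * (A j)ᵀ - R i j)`,
cyclicity of the trace and a reindexing of the double sum give the identity
`∑ i j, tr (Q i j * R i j) + ∑ i, tr (P i * S i) = tr (C * (∑ R) * Cᵀ)`.
The right side vanishes, while on the left every term is nonnegative (trace of a product of
positive semidefinite matrices) and the term of a nonzero `R i j` is positive since `Q i j` is
positive definite.
-/

open Matrix
open scoped MatrixOrder ComplexOrder

namespace Matrix

section TraceOfProduct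

variable {ι 𝕜 : Type*} [Fintype ι] [DecidableEq ι] [RCLike 𝕜] {A B : Matrix ι ι 𝕜}

lemma PosSemidef.trace_mul_eq_trace_sqrt_mul_mul_sqrt (hA : A.PosSemidef) (B : Matrix ι ι 𝕜) :
    (A * B).trace = (CFC.sqrt A * B * CFC.sqrt A).trace := by
  conv_lhs => rw [← CFC.sqrt_mul_sqrt_self A hA.nonneg, mul_assoc, trace_mul_comm]

lemma PosSemidef.sqrt_mul_mul_sqrt (hB : B.PosSemidef) (A : Matrix ι ι 𝕜) :
    (CFC.sqrt A * B * CFC.sqrt A).PosSemidef := by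
  have hsa : (CFC.sqrt A)ᴴ = CFC.sqrt A := (CFC.sqrt_nonneg A).isSelfAdjoint
  simpa only [hsa] using hB.conjTranspose_mul_mul_same (CFC.sqrt A)

lemma PosSemidef.trace_mul_nonneg_s5 (hA : A.PosSemidef) (hB : B.PosSemidef) :
    0 ≤ (A * B).trace := by
  rw [hA.trace_mul_eq_trace_sqrt_mul_mul_sqrt]
  exact (hB.sqrt_mul_mul_sqrt A).trace_nonneg

lemma PosDef.trace_mul_pos_s5 (hA : A.PosDef) (hB : B.PosSemidef) (hB0 : B ≠ 0) :
    0 < (A * B).trace := by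
  refine (hA.posSemidef.trace_mul_nonneg_s5 hB).lt_of_ne' fun h ↦ hB0 ?_
  have hunit : IsUnit (CFC.sqrt A) :=
    CFC.isUnit_sqrt_iff_isStrictlyPositive.mpr (isStrictlyPositive_iff_posDef.mpr hA)
  rw [hA.posSemidef.trace_mul_eq_trace_sqrt_mul_mul_sqrt,
    (hB.sqrt_mul_mul_sqrt A).trace_eq_zero_iff] at h
  simpa [hunit.mul_left_eq_zero, hunit.mul_right_eq_zero] using h

end TraceOfProduct

lemma sum_trace_mul_add_sum_trace_mul_eq_trace {ι n m R : Type*} [Fintype ι] [Fintype n]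
    [Fintype m] [CommRing R] (P A : ι → Matrix n n R) (C : Matrix m n R)
    (X : ι → ι → Matrix n n R) :
    ∑ i, ∑ j, ((P i - (A i)ᵀ * P j * A i + Cᵀ * C) * X i j).trace
      + ∑ i, (P i * ∑ j, (A j * X j i * (A j)ᵀ - X i j)).trace
      = (C * (∑ j, ∑ i, X j i) * Cᵀ).trace := by
  have hA : ∀ i j, ((A i)ᵀ * P j * A i * X i j).trace = (P j * (A i * X i j * (A i)ᵀ)).trace :=
    fun i j ↦ by simp only [mul_assoc]; rw [trace_mul_comm]; simp only [mul_assoc]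
  have hC : ∀ i j, (Cᵀ * C * X i j).trace = (C * X i j * Cᵀ).trace :=
    fun i j ↦ by rw [Matrix.mul_assoc, trace_mul_comm, Matrix.mul_assoc]
  simp only [add_mul, sub_mul, mul_sub, trace_add, trace_sub, hA, hC, Finset.mul_sum,
    Matrix.mul_sum, Matrix.sum_mul, trace_sum, Finset.sum_add_distrib, Finset.sum_sub_distrib]
  rw [Finset.sum_comm (f := fun i j ↦ (P j * (A i * X i j * (A i)ᵀ)).trace)]
  ring

end Matrix

/-- `R j i` stands for `R_{N(j-1)+i}` of the paper. -/
theorem weak_toa_poly_q_detectability {n m N : ℕ}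
    (A : Fin N → Matrix (Fin n) (Fin n) ℝ) (C : Matrix (Fin m) (Fin n) ℝ) :
    ¬ ((∃ P : Fin N → Matrix (Fin n) (Fin n) ℝ,
        (∀ i, (P i).IsSymm ∧ (P i).PosDef) ∧
        ∀ i j, (P i - (A i)ᵀ * P j * A i + Cᵀ * C).PosDef) ∧
      (∃ R : Fin N → Fin N → Matrix (Fin n) (Fin n) ℝ,
        (∀ j i, (R j i).IsSymm ∧ (R j i).PosSemidef) ∧
        (¬ ∀ j i, R j i = 0) ∧
        (∀ i, (∑ j, (A j * R j i * (A j)ᵀ - R i j)).PosSemidef) ∧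
        C * (∑ j, ∑ i, R j i) * Cᵀ = 0)) := by
  rintro ⟨⟨P, hP, hQ⟩, R, hR, hR0, hS, hC⟩
  push Not at hR0
  obtain ⟨i₀, j₀, hR₀⟩ := hR0
  have hsum := sum_trace_mul_add_sum_trace_mul_eq_trace P A C R
  rw [hC, trace_zero] at hsum
  have hQR (i j) := (hQ i j).posSemidef.trace_mul_nonneg_s5 (hR i j).2
  have hpos : 0 < ∑ i, ∑ j, ((P i - (A i)ᵀ * P j * A i + Cᵀ * C) * R i j).trace :=
    Finset.sum_pos' (fun i _ ↦ Finset.sum_nonneg fun j _ ↦ hQR i j)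
      ⟨i₀, Finset.mem_univ _, Finset.sum_pos' (fun j _ ↦ hQR i₀ j)
        ⟨j₀, Finset.mem_univ _, (hQ i₀ j₀).trace_mul_pos_s5 (hR i₀ j₀).2 hR₀⟩⟩
  have hPS : 0 ≤ ∑ i, (P i * ∑ j, (A j * R j i * (A j)ᵀ - R i j)).trace :=
    Finset.sum_nonneg fun i _ ↦ (hP i).2.posSemidef.trace_mul_nonneg_s5 (hS i)
  linarith
end

section
/- Weak theorem of alternatives for the poly-quadratic stabilizability necessary condition: it cannot simultaneously hold that (a) there exist symmetric positive definite matrices S₁,…,S_N ∈ ℝ^{n×n} with S_j − A_i S_i A_iᵀ + BBᵀ positive definite for all i,j ∈ {1,…,N}, and (b) there exist symmetric positive semidefinite matrices R₁,…,R_{N²} ∈ ℝ^{n×n}, not all zero, such that Σ_{j=1}^N (A_iᵀ R_{N(j−1)+i} A_i − R_{N(i−1)+j}) is positive semidefinite for every i ∈ {1,…,N}, and Bᵀ (Σ_{i=1}^{N²} R_i) B = 0. -/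
open Matrix

private lemma psd_trace_nonneg {k : Type*} [Fintype k] [DecidableEq k]
    {M : Matrix k k ℝ} (h : M.PosSemidef) : 0 ≤ M.trace := by
  rw [Matrix.trace]
  refine Finset.sum_nonneg fun i _ => ?_
  have := h.dotProduct_mulVec_nonneg (Pi.single i 1)
  simpa [Matrix.mulVec_single, Matrix.diag] using this

private lemma psd_trace_mul_nonneg {k : Type*} [Fintype k] [DecidableEq k]
    {M S : Matrix k k ℝ} (hM : M.PosSemidef) (hS : S.PosSemidef) :
    0 ≤ (M * S).trace := by
  obtain ⟨C, rfl⟩ : ∃ C : Matrix k k ℝ, M = Cᴴ * C := by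
    open scoped MatrixOrder in exact CStarAlgebra.nonneg_iff_eq_star_mul_self.mp hM.nonneg
  rw [Matrix.mul_assoc, Matrix.trace_mul_comm]
  exact psd_trace_nonneg ((hS.mul_mul_conjTranspose_same C))

private lemma row_quadform {k : Type*} [Fintype k] [DecidableEq k]
    (C S : Matrix k k ℝ) (i : k) :
    (C * S * Cᴴ) i i = star (C i) ⬝ᵥ (S *ᵥ (C i)) := by
  simp [Matrix.mul_apply, Matrix.mulVec, dotProduct, Finset.sum_mul, Finset.mul_sum,
    Matrix.conjTranspose_apply, mul_comm, mul_left_comm]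
  rw [Finset.sum_comm]
  exact Finset.sum_congr rfl fun _ _ => Finset.sum_congr rfl fun _ _ => by ring

private lemma psd_trace_mul_pos {k : Type*} [Fintype k] [DecidableEq k]
    {M S : Matrix k k ℝ} (hM : M.PosSemidef) (hM0 : M ≠ 0) (hS : S.PosDef) :
    0 < (M * S).trace := by
  obtain ⟨C, rfl⟩ : ∃ C : Matrix k k ℝ, M = Cᴴ * C := by
    open scoped MatrixOrder in exact CStarAlgebra.nonneg_iff_eq_star_mul_self.mp hM.nonneg
  have hC : C ≠ 0 := by rintro rfl; simp at hM0
  rw [Matrix.mul_assoc, Matrix.trace_mul_comm, Matrix.trace]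
  have hrow : ∃ i, C i ≠ 0 := by
    by_contra h
    push_neg at h
    exact hC (by ext i j; simpa using congrFun (h i) j)
  obtain ⟨i0, hi0⟩ := hrow
  refine Finset.sum_pos' (fun i _ => ?_) ⟨i0, Finset.mem_univ _, ?_⟩
  · rw [Matrix.diag, row_quadform]
    by_cases h : C i = 0
    · simp [h]
    · exact (hS.dotProduct_mulVec_pos h).le
  · rw [Matrix.diag, row_quadform]
    exact hS.dotProduct_mulVec_pos hi0

private lemma cyc {n : ℕ} (X M S : Matrix (Fin n) (Fin n) ℝ) :
    (Xᵀ * M * X * S).trace = (M * (X * S * Xᵀ)).trace := by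
  rw [show Xᵀ * M * X * S = Xᵀ * (M * X * S) by simp [Matrix.mul_assoc],
    Matrix.trace_mul_comm]
  simp [Matrix.mul_assoc]

/-- `R j i` stands for `R_{N(j-1)+i}` of the paper. -/
theorem weak_toa_poly_q_stabilizability {n m N : ℕ}
    (A : Fin N → Matrix (Fin n) (Fin n) ℝ) (B : Matrix (Fin n) (Fin m) ℝ) :
    ¬ ((∃ S : Fin N → Matrix (Fin n) (Fin n) ℝ,
        (∀ i, (S i).IsSymm ∧ (S i).PosDef) ∧
        ∀ i j, (S j - A i * S i * (A i)ᵀ + B * Bᵀ).PosDef) ∧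
      (∃ R : Fin N → Fin N → Matrix (Fin n) (Fin n) ℝ,
        (∀ j i, (R j i).IsSymm ∧ (R j i).PosSemidef) ∧
        (¬ ∀ j i, R j i = 0) ∧
        (∀ i, (∑ j, ((A i)ᵀ * R j i * A i - R i j)).PosSemidef) ∧
        Bᵀ * (∑ j, ∑ i, R j i) * B = 0)) := by
  rintro ⟨⟨S, hS, hSAB⟩, R, hRpsd, hR0, hsum, hB⟩
  have hT0 : (0:ℝ) ≤ ∑ i, ((∑ j, ((A i)ᵀ * R j i * A i - R i j)) * S i).trace :=
    Finset.sum_nonneg fun i _ => psd_trace_mul_nonneg (hsum i) (hS i).2.posSemidef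
  have step : ∀ i, ((∑ j, ((A i)ᵀ * R j i * A i - R i j)) * S i).trace
      = ∑ j, (((A i)ᵀ * R j i * A i) * S i).trace - ∑ j, (R i j * S i).trace := by
    intro i
    rw [Finset.sum_mul, Matrix.trace_sum]
    simp [Matrix.sub_mul, Finset.sum_sub_distrib]
  have hT : ∑ i, ((∑ j, ((A i)ᵀ * R j i * A i - R i j)) * S i).trace
      = ∑ i, ∑ j, (R j i * (A i * S i * (A i)ᵀ)).trace
        - ∑ i, ∑ j, (R j i * S j).trace := by
    simp only [step]
    rw [Finset.sum_sub_distrib]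
    congr 1
    · exact Finset.sum_congr rfl fun i _ => Finset.sum_congr rfl fun j _ =>
        cyc (A i) (R j i) (S i)
    · rw [Finset.sum_comm]
  have hsplit : ∀ (i j : Fin N), (R j i * (A i * S i * (A i)ᵀ)).trace - (R j i * S j).trace
      = (R j i * (B * Bᵀ)).trace
        - (R j i * (S j - A i * S i * (A i)ᵀ + B * Bᵀ)).trace := by
    intro i j
    simp only [Matrix.mul_sub, Matrix.mul_add, Matrix.trace_sub, Matrix.trace_add]
    ring
  have hfin : ∑ i, ∑ j, (R j i * (A i * S i * (A i)ᵀ)).trace - ∑ i, ∑ j, (R j i * S j).trace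
      = (∑ i, ∑ j, (R j i * (B * Bᵀ)).trace)
        - ∑ i, ∑ j, (R j i * (S j - A i * S i * (A i)ᵀ + B * Bᵀ)).trace := by
    rw [← Finset.sum_sub_distrib, ← Finset.sum_sub_distrib]
    simp only [← Finset.sum_sub_distrib]
    exact Finset.sum_congr rfl fun i _ => Finset.sum_congr rfl fun j _ => hsplit i j
  have hzero : ∑ i, ∑ j, (R j i * (B * Bᵀ)).trace = 0 := by
    have h1 : ∑ i, ∑ j, (R j i * (B * Bᵀ)).trace
        = ((∑ j, ∑ i, R j i) * (B * Bᵀ)).trace := by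
      rw [Finset.sum_comm]
      simp [Finset.sum_mul, Matrix.trace_sum]
    rw [h1, ← Matrix.mul_assoc, Matrix.trace_mul_cycle, hB,
      Matrix.trace_zero]
  have hpos : 0 < ∑ i, ∑ j, (R j i * (S j - A i * S i * (A i)ᵀ + B * Bᵀ)).trace := by
    push_neg at hR0
    obtain ⟨j0, i0, h0⟩ := hR0
    refine Finset.sum_pos' (fun i _ => Finset.sum_nonneg fun j _ =>
      psd_trace_mul_nonneg (hRpsd j i).2 (hSAB i j).posSemidef)
      ⟨i0, Finset.mem_univ _, ?_⟩
    exact Finset.sum_pos' (fun j _ =>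
      psd_trace_mul_nonneg (hRpsd j i0).2 (hSAB i0 j).posSemidef)
      ⟨j0, Finset.mem_univ _, psd_trace_mul_pos (hRpsd j0 i0).2 h0 (hSAB i0 j0)⟩
  linarith
end

section
/- If P₁,…,P_N ∈ ℝ^{n×n} are symmetric positive definite and P_i − A_iᵀ P_j A_i is positive definite for all i,j ∈ {1,…,N}, then every switched trajectory x_{k+1} = A_{σ(k)} x_k (with arbitrary switching signal σ : ℕ → {1,…,N}) converges to 0 as k → ∞. -/
/-!
`V k = x kᵀ P (σ k) x k` is a common Lyapunov function along the trajectory: the hypothesis on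
`P i - (A i)ᵀ P j A i` says `V k - V (k + 1) ≥ c ‖x k‖²` for one `c > 0` uniform in the finitely many
pairs `(i, j)`. Since `V ≥ 0`, the series `∑ c ‖x k‖²` telescopes to at most `V 0`, so `x k → 0`.
-/

open Matrix Filter Topology Finset

namespace Matrix

variable {ι : Type*} [Fintype ι]

lemma smul_dotProduct_mulVec_smul (Q : Matrix ι ι ℝ) (t : ℝ) (x : ι → ℝ) :
    (t • x) ⬝ᵥ Q *ᵥ (t • x) = t ^ 2 * (x ⬝ᵥ Q *ᵥ x) := by
  simp only [mulVec_smul, smul_dotProduct, dotProduct_smul, smul_eq_mul]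
  ring

lemma dotProduct_mulVec_sub_transpose_mul_mul {R : Type*} [CommRing R] (P Q A : Matrix ι ι R)
    (x : ι → R) :
    x ⬝ᵥ (P - Aᵀ * Q * A) *ᵥ x = x ⬝ᵥ P *ᵥ x - (A *ᵥ x) ⬝ᵥ Q *ᵥ (A *ᵥ x) := by
  rw [sub_mulVec, dotProduct_sub, ← mulVec_mulVec, ← mulVec_mulVec, dotProduct_mulVec x Aᵀ,
    vecMul_transpose]

lemma PosDef.exists_pos_mul_norm_sq_le {Q : Matrix ι ι ℝ} (hQ : Q.PosDef) :
    ∃ c > 0, ∀ x : ι → ℝ, c * ‖x‖ ^ 2 ≤ x ⬝ᵥ Q *ᵥ x := by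
  have hcont : Continuous fun x : ι → ℝ => x ⬝ᵥ Q *ᵥ x := by fun_prop
  obtain ⟨c, hc, hsphere⟩ := (isCompact_sphere (0 : ι → ℝ) 1).exists_forall_le'
    hcont.continuousOn (a := 0) fun u hu => by
      simpa using hQ.dotProduct_mulVec_pos (ne_zero_of_mem_unit_sphere ⟨u, hu⟩)
  refine ⟨c, hc, fun x => ?_⟩
  rcases eq_or_ne x 0 with rfl | hx
  · simp
  have hxpos : 0 < ‖x‖ := norm_pos_iff.2 hx
  have hunit : ‖x‖⁻¹ • x ∈ Metric.sphere (0 : ι → ℝ) 1 := by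
    simp [norm_smul, hxpos.ne']
  have := hsphere _ hunit
  rw [smul_dotProduct_mulVec_smul, inv_pow, inv_mul_eq_div, le_div_iff₀ (by positivity)] at this
  exact this

lemma PosDef.eventually_mul_norm_sq_le {Q : Matrix ι ι ℝ} (hQ : Q.PosDef) :
    ∀ᶠ c in 𝓝[>] 0, ∀ x : ι → ℝ, c * ‖x‖ ^ 2 ≤ x ⬝ᵥ Q *ᵥ x := by
  obtain ⟨c₀, hc₀, hle⟩ := hQ.exists_pos_mul_norm_sq_le
  filter_upwards [Ioc_mem_nhdsGT hc₀] with c hc x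
  exact (mul_le_mul_of_nonneg_right hc.2 (by positivity)).trans (hle x)

end Matrix

lemma summable_of_le_sub_succ {V a : ℕ → ℝ} (hV : ∀ k, 0 ≤ V k) (ha : ∀ k, 0 ≤ a k)
    (h : ∀ k, a k ≤ V k - V (k + 1)) : Summable a :=
  summable_of_sum_range_le ha fun m => calc
    ∑ k ∈ range m, a k ≤ ∑ k ∈ range m, (V k - V (k + 1)) := sum_le_sum fun k _ => h k
    _ = V 0 - V m := sum_range_sub' V m
    _ ≤ V 0 := sub_le_self _ (hV m)

lemma tendsto_zero_of_summable_mul_norm_sq {E : Type*} [SeminormedAddCommGroup E] {x : ℕ → E}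
    {c : ℝ} (hc : c ≠ 0) (hsum : Summable fun k => c * ‖x k‖ ^ 2) :
    Tendsto x atTop (𝓝 0) := by
  have hsq : Tendsto (fun k => ‖x k‖ ^ 2) atTop (𝓝 0) :=
    ((summable_mul_left_iff hc).1 hsum).tendsto_atTop_zero
  rw [tendsto_zero_iff_norm_tendsto_zero]
  simpa [Function.comp_def, Real.sqrt_sq (norm_nonneg _)] using
    (Real.continuous_sqrt.tendsto 0).comp hsq

theorem poly_qs_implies_convergence_general {n N : ℕ}
    (A P : Fin N → Matrix (Fin n) (Fin n) ℝ)
    (hPpd : ∀ i, (P i).PosDef)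
    (hdec : ∀ i j, (P i - (A i)ᵀ * P j * A i).PosDef)
    (σ : ℕ → Fin N) (x : ℕ → (Fin n → ℝ))
    (hx : ∀ k, x (k + 1) = (A (σ k)).mulVec (x k)) :
    Filter.Tendsto x Filter.atTop (nhds 0) := by
  obtain ⟨c, hle, hc⟩ := ((eventually_all.2 fun p : Fin N × Fin N =>
    (hdec p.1 p.2).eventually_mul_norm_sq_le).and self_mem_nhdsWithin).exists
  set V : ℕ → ℝ := fun k => x k ⬝ᵥ P (σ k) *ᵥ x k
  have hV : ∀ k, 0 ≤ V k := fun k => by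
    simpa using (hPpd (σ k)).posSemidef.dotProduct_mulVec_nonneg (x k)
  have hdecay : ∀ k, c * ‖x k‖ ^ 2 ≤ V k - V (k + 1) := fun k => by
    simpa only [V, hx, dotProduct_mulVec_sub_transpose_mul_mul] using hle (σ k, σ (k + 1)) (x k)
  have hsum := summable_of_le_sub_succ hV (fun k => by positivity) hdecay
  exact tendsto_zero_of_summable_mul_norm_sq hc.ne' hsum

theorem poly_qs_implies_convergence {n N : ℕ}
    (A P : Fin N → Matrix (Fin n) (Fin n) ℝ)
    (hPsym : ∀ i, (P i).IsSymm) (hPpd : ∀ i, (P i).PosDef)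
    (hdec : ∀ i j, (P i - (A i)ᵀ * P j * A i).PosDef)
    (σ : ℕ → Fin N) (x : ℕ → (Fin n → ℝ))
    (hx : ∀ k, x (k + 1) = (A (σ k)).mulVec (x k)) :
    Filter.Tendsto x Filter.atTop (nhds 0) :=
  poly_qs_implies_convergence_general A P hPpd hdec σ x hx
end

section
/- If P₁,…,P_N ∈ ℝ^{n×n} are symmetric positive definite matrices with P_i − A_iᵀ P_j A_i positive definite for all i,j, then for any convex-combination weights μ ∈ ℝ^N with μ_i ≥ 0 and Σ μ_i = 1, and any weights ν with the same properties, the matrix (Σ_i μ_i P_i) − A(μ)ᵀ (Σ_j ν_j P_j) A(μ) is positive definite, where A(μ) = Σ_i μ_i A_i. -/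
open Matrix
open scoped ComplexOrder

/-!
With `Q = ∑ⱼ νⱼ Pⱼ ⪰ 0` and `B = ∑ᵢ μᵢ Aᵢ`, the Jensen gap of `X ↦ Xᴴ Q X` is a variance:
`∑ᵢ μᵢ AᵢᴴQAᵢ - BᴴQB = ∑ᵢ μᵢ (Aᵢ - B)ᴴ Q (Aᵢ - B) ⪰ 0`. Hence the matrix in question is at least
`∑ᵢ μᵢ (Pᵢ - AᵢᴴQAᵢ)`, and each `Pᵢ - AᵢᴴQAᵢ = ∑ⱼ νⱼ (Pᵢ - AᵢᴴPⱼAᵢ)` is a convex combination of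
the positive definite vertex matrices.
-/

namespace Matrix

variable {ι m n 𝕜 : Type*} [Fintype m] [RCLike 𝕜]

theorem sum_smul_conjTranspose_mul_mul_eq_add (s : Finset ι) (μ : ι → ℝ)
    (hμ : ∑ i ∈ s, μ i = 1) (A : ι → Matrix m n 𝕜) (Q : Matrix m m 𝕜) :
    ∑ i ∈ s, μ i • ((A i)ᴴ * Q * A i) =
      (∑ i ∈ s, μ i • A i)ᴴ * Q * (∑ i ∈ s, μ i • A i) +
        ∑ i ∈ s, μ i • ((A i - ∑ j ∈ s, μ j • A j)ᴴ * Q * (A i - ∑ j ∈ s, μ j • A j)) := by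
  set B := ∑ j ∈ s, μ j • A j
  have hBH : Bᴴ = ∑ i ∈ s, μ i • (A i)ᴴ := by
    simp only [B, conjTranspose_sum, conjTranspose_smul, star_trivial]
  have hleft : ∑ i ∈ s, μ i • ((A i)ᴴ * Q * B) = Bᴴ * Q * B := by
    simp only [hBH, Matrix.sum_mul, Matrix.smul_mul]
  have hright : ∑ i ∈ s, μ i • (Bᴴ * Q * A i) = Bᴴ * Q * B := by
    simp only [B, Matrix.mul_sum, Matrix.mul_smul]
  have hconst : ∑ i ∈ s, μ i • (Bᴴ * Q * B) = Bᴴ * Q * B := by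
    rw [← Finset.sum_smul, hμ, one_smul]
  simp only [conjTranspose_sub, Matrix.sub_mul, Matrix.mul_sub, smul_sub, Finset.sum_sub_distrib,
    hleft, hright, hconst]
  abel

theorem PosSemidef.sum_smul_conjTranspose_mul_mul_sub [Finite n] {Q : Matrix m m 𝕜} (hQ : Q.PosSemidef)
    (s : Finset ι) {μ : ι → ℝ} (hμ : ∀ i ∈ s, 0 ≤ μ i) (hμ1 : ∑ i ∈ s, μ i = 1)
    (A : ι → Matrix m n 𝕜) :
    (∑ i ∈ s, μ i • ((A i)ᴴ * Q * A i) -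
      (∑ i ∈ s, μ i • A i)ᴴ * Q * (∑ i ∈ s, μ i • A i)).PosSemidef := by
  rw [sum_smul_conjTranspose_mul_mul_eq_add s μ hμ1, add_sub_cancel_left]
  exact posSemidef_sum s fun i hi => (hQ.conjTranspose_mul_mul_same _).smul (hμ i hi)

theorem posDef_sum_smul {s : Finset ι} {μ : ι → ℝ} (hμ : ∀ i ∈ s, 0 ≤ μ i)
    (hμ1 : ∑ i ∈ s, μ i = 1) {M : ι → Matrix n n 𝕜} (hM : ∀ i ∈ s, (M i).PosDef) :
    (∑ i ∈ s, μ i • M i).PosDef := by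
  classical
  obtain ⟨i₀, hi₀, hμi₀⟩ : ∃ i ∈ s, 0 < μ i :=
    Finset.exists_lt_of_sum_lt (by simp [hμ1] : ∑ i ∈ s, (0 : ℝ) < ∑ i ∈ s, μ i)
  rw [← Finset.add_sum_erase s _ hi₀]
  exact ((hM i₀ hi₀).smul hμi₀).add_posSemidef <| posSemidef_sum _ fun i hi =>
    (hM i (Finset.mem_of_mem_erase hi)).posSemidef.smul (hμ i (Finset.mem_of_mem_erase hi))

end Matrix

theorem poly_qs_convexification_general {n N : ℕ}
    (A P : Fin N → Matrix (Fin n) (Fin n) ℝ)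
    (hPpd : ∀ i, (P i).PosDef)
    (hdec : ∀ i j, (P i - (A i)ᵀ * P j * A i).PosDef)
    (μ ν : Fin N → ℝ) (hμ : ∀ i, 0 ≤ μ i) (hμ1 : ∑ i, μ i = 1)
    (hν : ∀ i, 0 ≤ ν i) (hν1 : ∑ i, ν i = 1) :
    ((∑ i, μ i • P i) - (∑ i, μ i • A i)ᵀ * (∑ j, ν j • P j) * (∑ i, μ i • A i)).PosDef := by
  simp only [← conjTranspose_eq_transpose_of_trivial] at hdec ⊢
  set Q := ∑ j, ν j • P j
  have hQ : Q.PosSemidef := posSemidef_sum _ fun j _ => (hPpd j).posSemidef.smul (hν j)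
  have hvertex : ∀ i, (P i - (A i)ᴴ * Q * A i).PosDef := by
    intro i
    have hmix : P i - (A i)ᴴ * Q * A i = ∑ j, ν j • (P i - (A i)ᴴ * P j * A i) := by
      simp only [Q, smul_sub, Finset.sum_sub_distrib, ← Finset.sum_smul, hν1, one_smul,
        Matrix.mul_sum, Matrix.sum_mul, Matrix.mul_smul, Matrix.smul_mul]
    rw [hmix]
    exact posDef_sum_smul (fun j _ => hν j) hν1 fun j _ => hdec i j
  have hsplit : ∑ i, μ i • P i - (∑ i, μ i • A i)ᴴ * Q * (∑ i, μ i • A i) =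
      ∑ i, μ i • (P i - (A i)ᴴ * Q * A i) +
        (∑ i, μ i • ((A i)ᴴ * Q * A i) - (∑ i, μ i • A i)ᴴ * Q * (∑ i, μ i • A i)) := by
    simp only [smul_sub, Finset.sum_sub_distrib]
    abel
  rw [hsplit]
  exact (posDef_sum_smul (fun i _ => hμ i) hμ1 fun i _ => hvertex i).add_posSemidef
    (hQ.sum_smul_conjTranspose_mul_mul_sub _ (fun i _ => hμ i) hμ1 A)

theorem poly_qs_convexification {n N : ℕ}
    (A P : Fin N → Matrix (Fin n) (Fin n) ℝ)
    (hPsym : ∀ i, (P i).IsSymm) (hPpd : ∀ i, (P i).PosDef)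
    (hdec : ∀ i j, (P i - (A i)ᵀ * P j * A i).PosDef)
    (μ ν : Fin N → ℝ) (hμ : ∀ i, 0 ≤ μ i) (hμ1 : ∑ i, μ i = 1)
    (hν : ∀ i, 0 ≤ ν i) (hν1 : ∑ i, ν i = 1) :
    ((∑ i, μ i • P i) - (∑ i, μ i • A i)ᵀ * (∑ j, ν j • P j) * (∑ i, μ i • A i)).PosDef :=
  poly_qs_convexification_general A P hPpd hdec μ ν hμ hμ1 hν hν1
end

section
/- Combining the certificate with the weak theorem of alternatives: for the matrices A₁ = (100/119)·[[0.80, 0.65], [−0.34, 0.90]] and A₂ = (100/119)·[[0.43, 0.62], [−1.48, 0.14]], there do not exist symmetric positive definite matrices P₁, P₂ ∈ ℝ^{2×2} such that P_i − A_iᵀ P_j A_i is positive definite for all i, j ∈ {1, 2}. -/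
/-!
Pair each of the four strict inequalities `P_i - A_iᵀ P_j A_i ≻ 0` with a rank-one positive
semidefinite matrix `x xᵀ`, i.e. evaluate its quadratic form at a test vector `x`: this gives
`(A_i x)ᵀ P_j (A_i x) < xᵀ P_i x`. For seven suitable test vectors (the supports of a dual
certificate of the weak theorem of alternatives) some positive combination of these inequalities
cancels every entry of `P₁` and `P₂`, leaving `0 < 0`.
-/

open Matrix

theorem Matrix.dotProduct_mulVec_transpose_mul_mul {n R : Type*} [Fintype n] [CommSemiring R]
    (A Q : Matrix n n R) (x : n → R) :
    x ⬝ᵥ (Aᵀ * Q * A) *ᵥ x = (A *ᵥ x) ⬝ᵥ Q *ᵥ (A *ᵥ x) := by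
  rw [← mulVec_mulVec, ← mulVec_mulVec, dotProduct_mulVec, vecMul_transpose]

theorem Matrix.PosDef.dotProduct_mulVec_lt_of_sub_transpose_mul_mul {n R : Type*} [Fintype n]
    [CommRing R] [PartialOrder R] [IsOrderedAddMonoid R] [StarRing R] [TrivialStar R]
    {P Q A : Matrix n n R} (h : (P - Aᵀ * Q * A).PosDef) {x : n → R} (hx : x ≠ 0) :
    (A *ᵥ x) ⬝ᵥ Q *ᵥ (A *ᵥ x) < x ⬝ᵥ P *ᵥ x := by
  have := h.dotProduct_mulVec_pos hx
  rwa [star_trivial, sub_mulVec, dotProduct_sub, dotProduct_mulVec_transpose_mul_mul,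
    sub_pos] at this

theorem concrete_no_poly_qlf :
    let A₁ : Matrix (Fin 2) (Fin 2) ℝ := (100 / 119 : ℝ) • !![0.80, 0.65; -0.34, 0.90]
    let A₂ : Matrix (Fin 2) (Fin 2) ℝ := (100 / 119 : ℝ) • !![0.43, 0.62; -1.48, 0.14]
    ¬ ∃ P₁ P₂ : Matrix (Fin 2) (Fin 2) ℝ,
      P₁.IsSymm ∧ P₂.IsSymm ∧ P₁.PosDef ∧ P₂.PosDef ∧
      (P₁ - A₁ᵀ * P₁ * A₁).PosDef ∧ (P₁ - A₁ᵀ * P₂ * A₁).PosDef ∧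
      (P₂ - A₂ᵀ * P₁ * A₂).PosDef ∧ (P₂ - A₂ᵀ * P₂ * A₂).PosDef := by
  intro A₁ A₂
  rintro ⟨P₁, P₂, -, -, -, -, h₁₁, h₁₂, h₂₁, h₂₂⟩
  have e₁ := h₂₁.dotProduct_mulVec_lt_of_sub_transpose_mul_mul (x := ![-5, 1]) (by simp)
  have e₂ := h₂₁.dotProduct_mulVec_lt_of_sub_transpose_mul_mul (x := ![-5, 2]) (by simp)
  have e₃ := h₂₁.dotProduct_mulVec_lt_of_sub_transpose_mul_mul (x := ![-4, 1]) (by simp)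
  have e₄ := h₁₁.dotProduct_mulVec_lt_of_sub_transpose_mul_mul (x := ![0, 1]) (by simp)
  have e₅ := h₁₂.dotProduct_mulVec_lt_of_sub_transpose_mul_mul (x := ![1, 1]) (by simp)
  have e₆ := h₂₂.dotProduct_mulVec_lt_of_sub_transpose_mul_mul (x := ![1, 1]) (by simp)
  have e₇ := h₂₂.dotProduct_mulVec_lt_of_sub_transpose_mul_mul (x := ![1, 2]) (by simp)
  simp only [A₁, A₂, smul_mulVec, mulVec_fin_two, of_apply, cons_val', cons_val_zero, cons_val_one,
    empty_val', cons_val_fin_one, smul_cons, smul_empty] at e₁ e₂ e₃ e₄ e₅ e₆ e₇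
  norm_num at e₁ e₂ e₃ e₄ e₅ e₆ e₇
  -- The weights of the cancelling combination have denominators of over twenty digits.
  linarith
end
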